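/- Let Ω ⊂ P(ℝ^d) be properly convex and let v, w be unit tangent vectors (for the Hilbert Finsler metric) whose forward geodesic rays γ_v, γ_w (projective line segments parametrized by arclength) converge to the same boundary point ξ ∈ ∂Ω. If ξ is a C¹-smooth point of ∂Ω, then the rays are asymptotic: there exists T ∈ ℝ such that d_Ω(γ_v(t+T), γ_w(t)) → 0 as t → ∞. -/

import Mathlib

open Set Filter
open scoped Classical

/-- Hilbert (cross-ratio) distance on a bounded open convex set. -/
noncomputable def hilbertDist {E : Type*} [AddCommGroup E] [Module ℝ E]
    (Ω : Set E) (p q : E) : ℝ :=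
  if p = q then 0
  else
    Real.log
      (((1 - sInf {t : ℝ | p + t • (q - p) ∈ Ω}) * sSup {t : ℝ | p + t • (q - p) ∈ Ω}) /
        ((0 - sInf {t : ℝ | p + t • (q - p) ∈ Ω}) *
          (sSup {t : ℝ | p + t • (q - p) ∈ Ω} - 1)))

/-- The segment `[b, x)` from `b` toward `x`, excluding `x`. -/
def segTo {E : Type*} [AddCommGroup E] [Module ℝ E] (b x : E) : Set E :=
  {z | ∃ t : ℝ, 0 ≤ t ∧ t < 1 ∧ z = (1 - t) • b + t • x}

open scoped Pointwise

/-- Auxiliary: if `ξ + ε • w ∈ Ω` and `0 < ε' ≤ ε`, with `ξ` in the closure of the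
open convex set `Ω`, then `ξ + ε' • w ∈ Ω`. -/
lemma aux_mem_of_smaller {E : Type*} [NormedAddCommGroup E] [NormedSpace ℝ E]
    (Ω : Set E) (hΩo : IsOpen Ω) (hΩc : Convex ℝ Ω) {ξ : E} (hξc : ξ ∈ closure Ω)
    (w : E) {ε ε' : ℝ} (hε' : 0 < ε') (hle : ε' ≤ ε) (hmem : ξ + ε • w ∈ Ω) :
    ξ + ε' • w ∈ Ω := by
  have hε : 0 < ε := lt_of_lt_of_le hε' hle
  have key : (ε'/ε) • (ξ + ε • w) + (1 - ε'/ε) • ξ = ξ + ε' • w := by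
    rw [smul_add, smul_smul, div_mul_cancel₀ _ hε.ne']
    module
  have hmem2 : (ε'/ε) • (ξ + ε • w) + (1 - ε'/ε) • ξ ∈ interior Ω :=
    hΩc.combo_interior_closure_mem_interior (by rw [hΩo.interior_eq]; exact hmem) hξc
      (by positivity) (by
        have : ε'/ε ≤ 1 := by rw [div_le_one hε]; exact hle
        linarith) (by ring)
  rw [key, hΩo.interior_eq] at hmem2
  exact hmem2

/-- Auxiliary: structure of the chord `{r | p + r • (ξ - p) ∈ Ω}` for `p ∈ Ω` and
`ξ` a boundary point: it is bounded, its supremum is `1`, its infimum is negative. -/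
lemma aux_chord_facts {E : Type*} [NormedAddCommGroup E] [NormedSpace ℝ E]
    (Ω : Set E) (hΩo : IsOpen Ω) (hΩc : Convex ℝ Ω) (hΩb : Bornology.IsBounded Ω)
    {ξ p : E} (hξc : ξ ∈ closure Ω) (hξn : ξ ∉ Ω) (hp : p ∈ Ω) :
    BddBelow {r : ℝ | p + r • (ξ - p) ∈ Ω} ∧ BddAbove {r : ℝ | p + r • (ξ - p) ∈ Ω} ∧
      sSup {r : ℝ | p + r • (ξ - p) ∈ Ω} = 1 ∧ sInf {r : ℝ | p + r • (ξ - p) ∈ Ω} < 0 := by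
  set S := {r : ℝ | p + r • (ξ - p) ∈ Ω} with hS
  have hξp : ξ - p ≠ 0 := sub_ne_zero.2 (fun h => hξn (h ▸ hp))
  have hnp : (0:ℝ) < ‖ξ - p‖ := norm_pos_iff.2 hξp
  obtain ⟨R, hR⟩ := hΩb.subset_closedBall p
  have hbound : ∀ r ∈ S, |r| ≤ R / ‖ξ - p‖ := by
    intro r hr
    have h1 : p + r • (ξ - p) ∈ Metric.closedBall p R := hR hr
    have h2 : dist (p + r • (ξ - p)) p ≤ R := Metric.mem_closedBall.1 h1
    have h3 : dist (p + r • (ξ - p)) p = |r| * ‖ξ - p‖ := by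
      rw [dist_eq_norm]
      simp [norm_smul, Real.norm_eq_abs]
    rw [h3] at h2
    rw [le_div_iff₀ hnp]
    exact h2
  have hbb : BddBelow S := ⟨-(R / ‖ξ - p‖), fun r hr => by
    have := hbound r hr; rw [abs_le] at this; exact this.1⟩
  have hba : BddAbove S := ⟨R / ‖ξ - p‖, fun r hr => by
    have := hbound r hr; rw [abs_le] at this; exact this.2⟩
  have hsub : ∀ r : ℝ, 0 ≤ r → r < 1 → r ∈ S := by
    intro r h0 h1
    have : (1 - r) • p + r • ξ ∈ interior Ω := by
      apply hΩc.combo_interior_closure_mem_interior (by rw [hΩo.interior_eq]; exact hp) hξc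
        (by linarith) h0 (by ring)
    rw [hΩo.interior_eq] at this
    have he : p + r • (ξ - p) = (1 - r) • p + r • ξ := by module
    rw [hS, mem_setOf_eq, he]
    exact this
  have hub : ∀ r ∈ S, r < 1 := by
    intro r hr
    by_contra h
    push_neg at h
    rcases eq_or_lt_of_le h with h1 | h1
    · apply hξn
      have : p + r • (ξ - p) ∈ Ω := hr
      rw [← h1] at this
      simpa using this
    · apply hξn
      have hz : p + r • (ξ - p) ∈ Ω := hr
      have hr0 : r ≠ 0 := by linarith
      have key : (1 - 1/r) • p + (1/r) • (p + r • (ξ - p)) = ξ := by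
        rw [smul_add, smul_smul]
        rw [one_div_mul_cancel hr0]
        module
      have hlt : (1:ℝ)/r < 1 := by
        rw [div_lt_one (by linarith)]; exact h1
      have := hΩc hp hz (a := 1 - 1/r) (b := 1/r) (by linarith) (by positivity) (by ring)
      rwa [key] at this
  have h0S : (0:ℝ) ∈ S := by simpa [hS] using hp
  have hne : S.Nonempty := ⟨0, h0S⟩
  have hsup : sSup S = 1 := by
    apply le_antisymm
    · exact csSup_le hne (fun r hr => le_of_lt (hub r hr))
    · by_contra h
      push_neg at h
      have h0 : 0 ≤ sSup S := le_csSup hba h0S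
      have hmem : (sSup S + 1)/2 ∈ S := hsub _ (by linarith) (by linarith)
      have := le_csSup hba hmem
      linarith
  refine ⟨hbb, hba, hsup, ?_⟩
  obtain ⟨δ, hδ, hball⟩ := Metric.isOpen_iff.1 hΩo p hp
  have hmem : -(δ / (2 * ‖ξ - p‖)) ∈ S := by
    apply hball
    rw [Metric.mem_ball, dist_eq_norm]
    have : p + (-(δ / (2 * ‖ξ - p‖))) • (ξ - p) - p = (-(δ / (2 * ‖ξ - p‖))) • (ξ - p) := by abel
    rw [this, norm_smul, Real.norm_eq_abs]
    rw [abs_neg, abs_of_nonneg (by positivity)]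
    rw [div_mul_eq_mul_div, mul_comm]
    rw [div_lt_iff₀ (by positivity)]
    nlinarith
  calc sInf S ≤ -(δ / (2 * ‖ξ - p‖)) := csInf_le hbb hmem
    _ < 0 := by
      have : 0 < δ / (2 * ‖ξ - p‖) := by positivity
      linarith

/-- Auxiliary: the Hilbert distance from `p` to a point on the chord toward `ξ`. -/
lemma aux_hilbertDist_on_chord {E : Type*} [NormedAddCommGroup E] [NormedSpace ℝ E]
    (Ω : Set E) {ξ p : E} (hξp : ξ - p ≠ 0)
    (hsup : sSup {r : ℝ | p + r • (ξ - p) ∈ Ω} = 1)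
    {m : ℝ} (hm : sInf {r : ℝ | p + r • (ξ - p) ∈ Ω} = m) (hm0 : m < 0)
    {α : ℝ} (hα0 : 0 < α) (hα1 : α < 1) :
    hilbertDist Ω p (p + α • (ξ - p)) = Real.log ((α - m) / ((-m) * (1 - α))) := by
  have hne : p ≠ p + α • (ξ - p) := by
    intro h
    have : α • (ξ - p) = 0 := by
      have := h.symm
      rwa [add_eq_left] at this
    rcases smul_eq_zero.1 this with h1 | h2
    · exact hα0.ne' h1
    · exact hξp h2
  rw [hilbertDist, if_neg hne]
  have hset : {t : ℝ | p + t • (p + α • (ξ - p) - p) ∈ Ω} = α⁻¹ • {r : ℝ | p + r • (ξ - p) ∈ Ω} := by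
    ext t
    simp only [mem_setOf_eq, Set.mem_smul_set, smul_eq_mul]
    constructor
    · intro h
      refine ⟨t * α, ?_, by field_simp⟩
      have : p + t • (p + α • (ξ - p) - p) = p + (t * α) • (ξ - p) := by
        rw [add_sub_cancel_left, smul_smul]
      rwa [this] at h
    · rintro ⟨r, hr, rfl⟩
      have : p + (α⁻¹ * r) • (p + α • (ξ - p) - p) = p + r • (ξ - p) := by
        rw [add_sub_cancel_left, smul_smul]
        congr 1
        field_simp
      rwa [this]
  rw [hset, Real.sInf_smul_of_nonneg (by positivity), Real.sSup_smul_of_nonneg (by positivity),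
    hsup, hm, smul_eq_mul, smul_eq_mul, mul_one]
  congr 1
  have hmne : m ≠ 0 := hm0.ne
  field_simp
  rw [mul_zero, zero_sub, neg_mul, div_neg, mul_div_mul_left _ _ hmne]

/-- Auxiliary: an upper bound for the Hilbert distance between two points whose
chord extends a long way inside `Ω` on both sides. -/
lemma aux_hilbertDist_le_of_deep {E : Type*} [NormedAddCommGroup E] [NormedSpace ℝ E]
    (Ω : Set E) (hΩb : Bornology.IsBounded Ω) {x y : E} (hx : x ∈ Ω) (hy : y ∈ Ω)
    {M : ℝ} (hM : 2 ≤ M) (h1 : x + M • (y - x) ∈ Ω) (h2 : x + (-M) • (y - x) ∈ Ω) :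
    |hilbertDist Ω x y| ≤ 2 * Real.log (1 + 1 / (M - 1)) := by
  have hMpos : (0:ℝ) < M - 1 := by linarith
  have hlogpos : 0 ≤ Real.log (1 + 1 / (M - 1)) := Real.log_nonneg (by
    have : 0 < 1 / (M-1) := by positivity
    linarith)
  by_cases hxy : x = y
  · rw [hilbertDist, if_pos hxy, abs_zero]; positivity
  · rw [hilbertDist, if_neg hxy]
    set S := {t : ℝ | x + t • (y - x) ∈ Ω} with hS
    have hyx : y - x ≠ 0 := sub_ne_zero.2 (Ne.symm hxy)
    have hnp : (0:ℝ) < ‖y - x‖ := norm_pos_iff.2 hyx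
    obtain ⟨R, hR⟩ := hΩb.subset_closedBall x
    have hbound : ∀ r ∈ S, |r| ≤ R / ‖y - x‖ := by
      intro r hr
      have h2' : dist (x + r • (y - x)) x ≤ R := Metric.mem_closedBall.1 (hR hr)
      have h3 : dist (x + r • (y - x)) x = |r| * ‖y - x‖ := by
        rw [dist_eq_norm]; simp [norm_smul, Real.norm_eq_abs]
      rw [h3] at h2'
      rw [le_div_iff₀ hnp]; exact h2'
    have hbb : BddBelow S := ⟨-(R / ‖y - x‖), fun r hr => by
      have := hbound r hr; rw [abs_le] at this; exact this.1⟩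
    have hba : BddAbove S := ⟨R / ‖y - x‖, fun r hr => by
      have := hbound r hr; rw [abs_le] at this; exact this.2⟩
    have hM1 : M ∈ S := h1
    have hM2 : -M ∈ S := h2
    have hInf : sInf S ≤ -M := csInf_le hbb hM2
    have hSup : M ≤ sSup S := le_csSup hba hM1
    set m := sInf S
    set Mx := sSup S
    clear_value m Mx
    have hm0 : m < 0 := by linarith
    have hMx1 : 1 < Mx := by linarith
    have harg_pos : 0 < ((1 - m) * Mx) / ((0 - m) * (Mx - 1)) := by
      apply div_pos
      · apply mul_pos <;> linarith
      · apply mul_pos <;> linarith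
    have hfact : ((1 - m) * Mx) / ((0 - m) * (Mx - 1)) =
        (1 + 1 / (-m)) * (1 + 1 / (Mx - 1)) := by
      have hmne : m ≠ 0 := hm0.ne
      have h1' : Mx - 1 ≠ 0 := by linarith
      rw [div_eq_iff (ne_of_gt (mul_pos (by linarith : (0:ℝ) < 0 - m)
        (by linarith : (0:ℝ) < Mx - 1)))]
      field_simp
      ring
    have h1le : (1:ℝ) ≤ ((1 - m) * Mx) / ((0 - m) * (Mx - 1)) := by
      rw [hfact]
      have a1 : (0:ℝ) < 1 / (-m) := div_pos one_pos (by linarith)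
      have a2 : (0:ℝ) < 1 / (Mx - 1) := div_pos one_pos (by linarith)
      nlinarith
    have hupper : ((1 - m) * Mx) / ((0 - m) * (Mx - 1)) ≤ (1 + 1 / (M - 1)) ^ 2 := by
      rw [hfact]
      have a1 : 1 / (-m) ≤ 1 / (M - 1) := by
        apply div_le_div_of_nonneg_left (by norm_num) hMpos (by linarith)
      have a2 : 1 / (Mx - 1) ≤ 1 / (M - 1) := by
        apply div_le_div_of_nonneg_left (by norm_num) hMpos (by linarith)
      have b1 : (0:ℝ) < 1 / (-m) := div_pos one_pos (by linarith)
      have b2 : (0:ℝ) < 1 / (Mx - 1) := div_pos one_pos (by linarith)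
      nlinarith
    rw [abs_of_nonneg (Real.log_nonneg h1le)]
    calc Real.log (((1 - m) * Mx) / ((0 - m) * (Mx - 1)))
        ≤ Real.log ((1 + 1 / (M - 1)) ^ 2) := Real.log_le_log harg_pos hupper
      _ = 2 * Real.log (1 + 1 / (M - 1)) := by
          rw [Real.log_pow]; push_cast; ring

/-- Auxiliary: at a `C¹`-smooth boundary point, every direction on the negative side
of the supporting hyperplane points into `Ω`. -/
lemma aux_smooth_cone {E : Type*} [NormedAddCommGroup E] [NormedSpace ℝ E]
    (Ω : Set E) (hΩo : IsOpen Ω) (hΩc : Convex ℝ Ω)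
    {ξ : E} (hξc : ξ ∈ closure Ω)
    (hsmooth : ∀ f g : E →L[ℝ] ℝ, f ≠ 0 → g ≠ 0 →
      (∀ y ∈ Ω, f y < f ξ) → (∀ y ∈ Ω, g y < g ξ) → ∃ c : ℝ, 0 < c ∧ f = c • g)
    {p : E} (hp : p ∈ Ω)
    (f : E →L[ℝ] ℝ) (hf : ∀ y ∈ Ω, f y < f ξ)
    {v : E} (hv : f v < 0) :
    ∃ ε : ℝ, 0 < ε ∧ ξ + ε • v ∈ Ω := by
  set C : Set E := {w : E | ∃ ε : ℝ, 0 < ε ∧ ξ + ε • w ∈ Ω} with hC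
  have hdown : ∀ w : E, ∀ ε ε' : ℝ, 0 < ε' → ε' ≤ ε → ξ + ε • w ∈ Ω → ξ + ε' • w ∈ Ω :=
    fun w ε ε' hε' hle hmem => aux_mem_of_smaller Ω hΩo hΩc hξc w hε' hle hmem
  have hscale : ∀ w : E, ∀ t : ℝ, 0 < t → w ∈ C → t • w ∈ C := by
    rintro w t ht ⟨ε, hε, hmem⟩
    refine ⟨ε / t, by positivity, ?_⟩
    have : (ε / t) • (t • w) = ε • w := by
      rw [smul_smul, div_mul_cancel₀ _ ht.ne']
    rw [this]; exact hmem
  have hconv : Convex ℝ C := by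
    rintro w hw w' hw' a b ha hb hab
    rcases hw with ⟨ε, hε, hmem⟩
    rcases hw' with ⟨ε', hε', hmem'⟩
    set ε₀ := min ε ε' with hε₀
    have h₀ : 0 < ε₀ := lt_min hε hε'
    have hw₀ : ξ + ε₀ • w ∈ Ω := hdown w ε ε₀ h₀ (min_le_left _ _) hmem
    have hw₀' : ξ + ε₀ • w' ∈ Ω := hdown w' ε' ε₀ h₀ (min_le_right _ _) hmem'
    refine ⟨ε₀, h₀, ?_⟩
    have key : a • (ξ + ε₀ • w) + b • (ξ + ε₀ • w') = ξ + ε₀ • (a • w + b • w') := by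
      have h1 : a • ξ + b • ξ = ξ := by
        rw [← add_smul, hab, one_smul]
      calc a • (ξ + ε₀ • w) + b • (ξ + ε₀ • w')
          = (a • ξ + b • ξ) + (a • (ε₀ • w) + b • (ε₀ • w')) := by abel_nf; module
        _ = ξ + ε₀ • (a • w + b • w') := by rw [h1]; congr 1; module
    rw [← key]
    exact hΩc hw₀ hw₀' ha hb hab
  have hopen : IsOpen C := by
    rw [Metric.isOpen_iff]
    rintro w ⟨ε, hε, hmem⟩
    obtain ⟨δ, hδ, hball⟩ := Metric.isOpen_iff.1 hΩo _ hmem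
    refine ⟨δ / ε, by positivity, ?_⟩
    intro w' hw'
    refine ⟨ε, hε, ?_⟩
    apply hball
    rw [Metric.mem_ball, dist_eq_norm] at hw' ⊢
    have : ξ + ε • w' - (ξ + ε • w) = ε • (w' - w) := by module
    rw [this, norm_smul, Real.norm_eq_abs, abs_of_pos hε]
    calc ε * ‖w' - w‖ < ε * (δ / ε) := by
          apply mul_lt_mul_of_pos_left hw' hε
      _ = δ := by field_simp
  have hpC : p - ξ ∈ C := ⟨1, one_pos, by simpa using hp⟩
  by_contra hvC
  push_neg at hvC
  have hvC' : v ∉ C := by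
    rintro ⟨ε, hε, hmem⟩
    exact absurd hmem (by
      intro h
      exact absurd h (by
        have := hvC ε hε
        simpa using this))
  obtain ⟨h, hh⟩ := geometric_hahn_banach_open_point hconv hopen hvC'
  have hne : h ≠ 0 := by
    intro h0
    have := hh _ hpC
    rw [h0] at this
    simp at this
  have hle0 : ∀ w ∈ C, h w ≤ 0 := by
    intro w hw
    by_contra hpos
    push_neg at hpos
    have ht : 0 < (|h v| + 1) / h w := by positivity
    have := hh _ (hscale w _ ht hw)
    rw [map_smul, smul_eq_mul, div_mul_cancel₀ _ hpos.ne'] at this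
    have h1 : h v ≤ |h v| := le_abs_self _
    linarith
  have hv0 : 0 ≤ h v := by
    by_contra hneg
    push_neg at hneg
    rcases lt_trichotomy (h (p - ξ)) 0 with hw | hw | hw
    · set a := h (p - ξ) with ha
      have hane : a ≠ 0 := hw.ne
      have ht : 0 < (h v) / (2 * a) := by
        apply div_pos_of_neg_of_neg hneg
        linarith
      have := hh _ (hscale _ _ ht hpC)
      rw [map_smul, smul_eq_mul, ← ha] at this
      have heq : h v / (2 * a) * a = h v / 2 := by
        field_simp
      rw [heq] at this
      linarith
    · have := hh _ hpC
      rw [hw] at this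
      linarith
    · exact absurd hw (not_lt.2 (hle0 _ hpC))
  have hsupp : ∀ y ∈ Ω, h y < h ξ := by
    intro y hy
    have hyC : y - ξ ∈ C := ⟨1, one_pos, by simpa using hy⟩
    have hle : h y ≤ h ξ := by
      have := hle0 _ hyC
      rw [map_sub] at this
      linarith
    rcases eq_or_lt_of_le hle with heq | hlt
    · exfalso
      obtain ⟨u, hu⟩ : ∃ u : E, h u ≠ 0 := by
        by_contra hall
        push_neg at hall
        exact hne (ContinuousLinearMap.ext fun u => by simp [hall u])
      have hu' : ∃ u : E, 0 < h u := by
        rcases lt_trichotomy (h u) 0 with h1 | h1 | h1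
        · exact ⟨-u, by rw [map_neg]; linarith⟩
        · exact absurd h1 hu
        · exact ⟨u, h1⟩
      obtain ⟨u, hupos⟩ := hu'
      have hune : u ≠ 0 := by
        intro h0; rw [h0, map_zero] at hupos; exact lt_irrefl _ hupos
      obtain ⟨δ, hδ, hball⟩ := Metric.isOpen_iff.1 hΩo _ hy
      have hnu : (0:ℝ) < ‖u‖ := norm_pos_iff.2 hune
      have hc2 : 0 < δ / (2 * ‖u‖) := div_pos hδ (by linarith)
      set y' := y + (δ / (2 * ‖u‖)) • u with hy'
      have hy'Ω : y' ∈ Ω := by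
        apply hball
        rw [Metric.mem_ball, dist_eq_norm, hy']
        have : y + (δ / (2 * ‖u‖)) • u - y = (δ / (2 * ‖u‖)) • u := by abel
        rw [this, norm_smul, Real.norm_eq_abs, abs_of_pos hc2]
        rw [div_mul_eq_mul_div, mul_comm]
        rw [div_lt_iff₀ (by linarith)]
        nlinarith
      have hy'C : y' - ξ ∈ C := ⟨1, one_pos, by simpa using hy'Ω⟩
      have := hle0 _ hy'C
      rw [map_sub] at this
      have : h y' ≤ h ξ := by linarith
      rw [hy', map_add, map_smul, smul_eq_mul] at this
      have hpos : 0 < δ / (2 * ‖u‖) * h u := mul_pos hc2 hupos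
      rw [heq] at this
      linarith
    · exact hlt
  have hfne : f ≠ 0 := by
    intro h0
    have := hf p hp
    rw [h0] at this
    simp at this
  obtain ⟨c, hc, hfc⟩ := hsmooth f h hfne hne hf hsupp
  have : f v = c * h v := by rw [hfc]; simp
  rw [this] at hv
  nlinarith

/-- Auxiliary: explicit formula for a unit-speed Hilbert geodesic ray along the
segment from `p` toward the boundary point `ξ`. -/
lemma aux_geodesic_formula {E : Type*} [NormedAddCommGroup E] [NormedSpace ℝ E]
    (Ω : Set E) {ξ p : E} (hξp : ξ - p ≠ 0)
    (hsup : sSup {r : ℝ | p + r • (ξ - p) ∈ Ω} = 1)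
    {β : ℝ} (hβ : sInf {r : ℝ | p + r • (ξ - p) ∈ Ω} = -β) (hβpos : 0 < β)
    (c : ℝ → E) (hseg : ∀ t : ℝ, 0 ≤ t → c t ∈ segTo p ξ) (hzero : c 0 = p)
    (hspeed : ∀ s : ℝ, 0 ≤ s → ∀ t : ℝ, 0 ≤ t → hilbertDist Ω (c s) (c t) = |s - t|)
    {t : ℝ} (ht : 1 ≤ t) :
    c t = ξ + ((1 + β) / (1 + β * Real.exp t)) • (p - ξ) := by
  have ht0 : (0:ℝ) ≤ t := by linarith
  have hd : hilbertDist Ω p (c t) = t := by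
    have := hspeed 0 le_rfl t ht0
    rw [hzero] at this
    rw [this, zero_sub, abs_neg, abs_of_nonneg ht0]
  obtain ⟨α, hα0, hα1, hz⟩ := hseg t ht0
  have he : c t = p + α • (ξ - p) := by rw [hz]; module
  have hαpos : 0 < α := by
    rcases eq_or_lt_of_le hα0 with h0 | h0
    · exfalso
      have : c t = p := by rw [he, ← h0]; simp
      rw [this, hilbertDist, if_pos rfl] at hd
      linarith
    · exact h0
  rw [he, aux_hilbertDist_on_chord Ω hξp hsup hβ (by linarith) hαpos hα1] at hd
  have hX : (0:ℝ) < (α - -β) / (-(-β) * (1 - α)) := by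
    apply div_pos (by linarith)
    apply mul_pos (by linarith) (by linarith)
  have hexp : Real.exp t = (α - -β) / (-(-β) * (1 - α)) := by
    rw [← hd, Real.exp_log hX]
  set Ex := Real.exp t with hEx
  have hEpos : 0 < Ex := Real.exp_pos t
  have heq : α + β = Ex * (β * (1 - α)) := by
    have hden : -(-β) * (1 - α) ≠ 0 := by
      apply ne_of_gt
      apply mul_pos (by linarith) (by linarith)
    rw [eq_div_iff hden] at hexp
    linarith [hexp]
  have hden2 : (0:ℝ) < 1 + β * Ex := by nlinarith
  have h1α : 1 - α = (1 + β) / (1 + β * Ex) := by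
    rw [eq_div_iff hden2.ne']
    linear_combination -heq
  rw [he, ← h1α]
  module

set_option maxHeartbeats 1000000 in
/-- Benoist's asymptotic-geodesics lemma: two unit-speed Hilbert geodesic rays
(projective line segments, parametrized by Hilbert arclength) from `p` and `q`
converging to the same `C¹`-smooth boundary point `ξ` of a properly convex domain `Ω`
(i.e. `ξ` has a unique supporting hyperplane, up to positive scaling of the
functional) are asymptotic: for some time shift `T`,
`d_Ω(c₁(t + T), c₂(t)) → 0` as `t → ∞`. -/
theorem hilbert_geodesics_asymptotic_at_smooth_point
    {E : Type*} [NormedAddCommGroup E] [NormedSpace ℝ E]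
    (Ω : Set E) (hΩo : IsOpen Ω) (hΩc : Convex ℝ Ω) (hΩb : Bornology.IsBounded Ω)
    (ξ : E) (hξ : ξ ∈ frontier Ω)
    (hsmooth : ∀ f g : E →L[ℝ] ℝ, f ≠ 0 → g ≠ 0 →
      (∀ y ∈ Ω, f y < f ξ) → (∀ y ∈ Ω, g y < g ξ) → ∃ c : ℝ, 0 < c ∧ f = c • g)
    (p q : E) (hp : p ∈ Ω) (hq : q ∈ Ω)
    (c₁ c₂ : ℝ → E)
    (hc₁_seg : ∀ t : ℝ, 0 ≤ t → c₁ t ∈ segTo p ξ) (hc₁_zero : c₁ 0 = p)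
    (hc₁_speed : ∀ s : ℝ, 0 ≤ s → ∀ t : ℝ, 0 ≤ t →
      hilbertDist Ω (c₁ s) (c₁ t) = |s - t|)
    (hc₁_lim : Tendsto c₁ atTop (nhds ξ))
    (hc₂_seg : ∀ t : ℝ, 0 ≤ t → c₂ t ∈ segTo q ξ) (hc₂_zero : c₂ 0 = q)
    (hc₂_speed : ∀ s : ℝ, 0 ≤ s → ∀ t : ℝ, 0 ≤ t →
      hilbertDist Ω (c₂ s) (c₂ t) = |s - t|)
    (hc₂_lim : Tendsto c₂ atTop (nhds ξ)) :
    ∃ T : ℝ, Tendsto (fun t => hilbertDist Ω (c₁ (t + T)) (c₂ t)) atTop (nhds 0) := by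
  have hξc : ξ ∈ closure Ω := frontier_subset_closure hξ
  have hξn : ξ ∉ Ω := fun h => hξ.2 (by rwa [hΩo.interior_eq])
  have hξp : ξ - p ≠ 0 := sub_ne_zero.2 (fun h => hξn (h ▸ hp))
  have hξq : ξ - q ≠ 0 := sub_ne_zero.2 (fun h => hξn (h ▸ hq))
  obtain ⟨hbb₁, hba₁, hsup₁, hinf₁⟩ := aux_chord_facts Ω hΩo hΩc hΩb hξc hξn hp
  obtain ⟨hbb₂, hba₂, hsup₂, hinf₂⟩ := aux_chord_facts Ω hΩo hΩc hΩb hξc hξn hq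
  set β : ℝ := -sInf {r : ℝ | p + r • (ξ - p) ∈ Ω} with hβdef
  set β' : ℝ := -sInf {r : ℝ | q + r • (ξ - q) ∈ Ω} with hβ'def
  have hβpos : 0 < β := by rw [hβdef]; linarith
  have hβ'pos : 0 < β' := by rw [hβ'def]; linarith
  have hβ : sInf {r : ℝ | p + r • (ξ - p) ∈ Ω} = -β := by rw [hβdef, neg_neg]
  have hβ' : sInf {r : ℝ | q + r • (ξ - q) ∈ Ω} = -β' := by rw [hβ'def, neg_neg]
  obtain ⟨f, hf⟩ := geometric_hahn_banach_open_point hΩc hΩo hξn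
  have hFp : f p - f ξ < 0 := by have := hf p hp; linarith
  have hFq : f q - f ξ < 0 := by have := hf q hq; linarith
  set lam : ℝ := (f q - f ξ) / (f p - f ξ) with hlam
  have hlampos : 0 < lam := div_pos_of_neg_of_neg hFq hFp
  have hlamFp : lam * (f p - f ξ) = f q - f ξ := by
    rw [hlam, div_mul_cancel₀ _ hFp.ne]
  set T : ℝ := Real.log (β' * (1 + β) / (lam * β * (1 + β'))) with hT
  have hTexp : Real.exp T = β' * (1 + β) / (lam * β * (1 + β')) := by
    rw [hT]
    exact Real.exp_log (div_pos (mul_pos hβ'pos (by linarith))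
      (mul_pos (mul_pos hlampos hβpos) (by linarith)))
  refine ⟨T, ?_⟩
  set e₁ : ℝ → ℝ := fun t => (1 + β) / (1 + β * Real.exp (t + T)) with he₁def
  set e₂ : ℝ → ℝ := fun t => (1 + β') / (1 + β' * Real.exp t) with he₂def
  have hd₁ : ∀ t : ℝ, 0 < 1 + β * Real.exp (t + T) := by
    intro t; nlinarith [Real.exp_pos (t + T)]
  have hd₂ : ∀ t : ℝ, 0 < 1 + β' * Real.exp t := by
    intro t; nlinarith [Real.exp_pos t]
  have he₁pos : ∀ t : ℝ, 0 < e₁ t := by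
    intro t; rw [he₁def]; exact div_pos (by linarith) (hd₁ t)
  have he₂pos : ∀ t : ℝ, 0 < e₂ t := by
    intro t; rw [he₂def]; exact div_pos (by linarith) (hd₂ t)
  have hc₁eq : ∀ t : ℝ, 1 ≤ t + T → c₁ (t + T) = ξ + e₁ t • (p - ξ) := by
    intro t h
    rw [he₁def]
    exact aux_geodesic_formula Ω hξp hsup₁ hβ hβpos c₁ hc₁_seg hc₁_zero hc₁_speed h
  have hc₂eq : ∀ t : ℝ, 1 ≤ t → c₂ t = ξ + e₂ t • (q - ξ) := by
    intro t h
    rw [he₂def]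
    exact aux_geodesic_formula Ω hξq hsup₂ hβ' hβ'pos c₂ hc₂_seg hc₂_zero hc₂_speed h
  -- e₂ → 0
  have he₂lim : Tendsto e₂ atTop (nhds 0) := by
    rw [he₂def]
    apply Filter.Tendsto.div_atTop (tendsto_const_nhds)
    apply tendsto_atTop_add_const_left
    exact (Real.tendsto_exp_atTop).const_mul_atTop hβ'pos
  -- the ratio e₁/e₂ tends to lam
  have hexplim : Tendsto (fun t : ℝ => Real.exp (-t)) atTop (nhds 0) := by
    exact Real.tendsto_exp_atBot.comp tendsto_neg_atTop_atBot
  have hrw : ∀ t : ℝ, e₁ t / e₂ t =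
      ((1 + β) * (Real.exp (-t) + β')) / ((1 + β') * (Real.exp (-t) + β * Real.exp T)) := by
    intro t
    simp only [he₁def, he₂def]
    have h1 : Real.exp (t + T) = Real.exp t * Real.exp T := Real.exp_add t T
    have h2 : Real.exp (-t) = (Real.exp t)⁻¹ := Real.exp_neg t
    have h3 := Real.exp_pos t
    have h4 := Real.exp_pos T
    have d1 := hd₁ t
    have d2 := hd₂ t
    rw [h1] at d1 ⊢
    rw [h2]
    field_simp
  have hrlim : Tendsto (fun t : ℝ => e₁ t / e₂ t) atTop (nhds lam) := by
    have hnum : Tendsto (fun t : ℝ => (1 + β) * (Real.exp (-t) + β')) atTop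
        (nhds ((1 + β) * (0 + β'))) :=
      ((hexplim.add tendsto_const_nhds).const_mul _)
    have hden : Tendsto (fun t : ℝ => (1 + β') * (Real.exp (-t) + β * Real.exp T)) atTop
        (nhds ((1 + β') * (0 + β * Real.exp T))) :=
      ((hexplim.add tendsto_const_nhds).const_mul _)
    have hden0 : (1 + β') * (0 + β * Real.exp T) ≠ 0 := by
      apply ne_of_gt
      apply mul_pos (by linarith)
      rw [zero_add]
      exact mul_pos hβpos (Real.exp_pos T)
    have hdiv := hnum.div hden hden0
    have hval : (1 + β) * (0 + β') / ((1 + β') * (0 + β * Real.exp T)) = lam := by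
      rw [hTexp]
      rw [zero_add, zero_add]
      rw [div_eq_iff (by
        apply ne_of_gt
        apply mul_pos (by linarith)
        apply mul_pos hβpos
        exact div_pos (mul_pos hβ'pos (by linarith))
          (mul_pos (mul_pos hlampos hβpos) (by linarith)))]
      field_simp
    rw [hval] at hdiv
    exact hdiv.congr (fun t => (hrw t).symm)
  -- key membership claim
  have hmem : ∀ s : ℝ, ∀ᶠ t in atTop,
      (ξ + e₁ t • (p - ξ)) + s • ((ξ + e₂ t • (q - ξ)) - (ξ + e₁ t • (p - ξ))) ∈ Ω := by
    intro s
    set v : E := ((1 - s) * lam) • (p - ξ) + s • (q - ξ) with hv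
    have hfv : f v < 0 := by
      have h1 : f v = (1 - s) * (lam * (f p - f ξ)) + s * (f q - f ξ) := by
        rw [hv]
        simp only [map_add, map_smul, map_sub, smul_eq_mul]
        ring
      rw [h1, hlamFp]
      nlinarith
    obtain ⟨ε₀, hε₀, hε₀mem⟩ := aux_smooth_cone Ω hΩo hΩc hξc hsmooth hp f hf hfv
    obtain ⟨δ, hδ, hball⟩ := Metric.isOpen_iff.1 hΩo _ hε₀mem
    set w : ℝ → E := fun t => ((1 - s) * (e₁ t / e₂ t)) • (p - ξ) + s • (q - ξ) with hw
    have hwlim : Tendsto w atTop (nhds v) := by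
      rw [hw, hv]
      exact ((hrlim.const_mul (1 - s)).smul_const (p - ξ)).add tendsto_const_nhds
    have hev1 : ∀ᶠ t in atTop, dist (w t) v < δ / ε₀ :=
      hwlim.eventually (Metric.ball_mem_nhds v (div_pos hδ hε₀))
    have hev2 : ∀ᶠ t in atTop, dist (e₂ t) 0 < ε₀ :=
      he₂lim.eventually (Metric.ball_mem_nhds 0 hε₀)
    filter_upwards [hev1, hev2] with t h1 h2
    have he2le : e₂ t ≤ ε₀ := by
      rw [Real.dist_eq, sub_zero] at h2
      calc e₂ t ≤ |e₂ t| := le_abs_self _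
        _ ≤ ε₀ := le_of_lt h2
    -- ξ + ε₀ • w t ∈ Ω
    have hwmem : ξ + ε₀ • w t ∈ Ω := by
      apply hball
      rw [Metric.mem_ball, dist_eq_norm]
      have : ξ + ε₀ • w t - (ξ + ε₀ • v) = ε₀ • (w t - v) := by module
      rw [this, norm_smul, Real.norm_eq_abs, abs_of_pos hε₀]
      rw [dist_eq_norm] at h1
      calc ε₀ * ‖w t - v‖ < ε₀ * (δ / ε₀) := mul_lt_mul_of_pos_left h1 hε₀
        _ = δ := by field_simp
    have hzmem : ξ + e₂ t • w t ∈ Ω :=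
      aux_mem_of_smaller Ω hΩo hΩc hξc (w t) (he₂pos t) he2le hwmem
    have hzeq : (ξ + e₁ t • (p - ξ)) + s • ((ξ + e₂ t • (q - ξ)) - (ξ + e₁ t • (p - ξ)))
        = ξ + e₂ t • w t := by
      rw [hw]
      have hsc : e₂ t * ((1 - s) * (e₁ t / e₂ t)) = (1 - s) * e₁ t := by
        have h0 := (he₂pos t).ne'
        field_simp
      have hkey : e₂ t • (((1 - s) * (e₁ t / e₂ t)) • (p - ξ) + s • (q - ξ))
          = ((1 - s) * e₁ t) • (p - ξ) + (e₂ t * s) • (q - ξ) := by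
        rw [smul_add, smul_smul, smul_smul, hsc]
      rw [hkey]
      module
    rw [hzeq]
    exact hzmem
  -- conclusion
  rw [Metric.tendsto_nhds]
  intro ε hε
  set M : ℝ := max 2 (1 + 1 / (Real.exp (ε / 4) - 1)) with hM
  have hM2 : 2 ≤ M := le_max_left _ _
  have hexpε : (0:ℝ) < Real.exp (ε / 4) - 1 := by
    have h1 : ε / 4 + 1 ≤ Real.exp (ε / 4) := Real.add_one_le_exp (ε / 4)
    linarith
  have hMbound : 2 * Real.log (1 + 1 / (M - 1)) < ε := by
    have hM1 : (0:ℝ) < M - 1 := by linarith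
    have hle : 1 / (Real.exp (ε / 4) - 1) ≤ M - 1 := by
      have := le_max_right 2 (1 + 1 / (Real.exp (ε / 4) - 1))
      linarith
    have h1 : 1 / (M - 1) ≤ Real.exp (ε / 4) - 1 := by
      rw [div_le_iff₀ hM1]
      rw [div_le_iff₀ hexpε] at hle
      nlinarith
    have h2 : Real.log (1 + 1 / (M - 1)) ≤ ε / 4 := by
      calc Real.log (1 + 1 / (M - 1)) ≤ Real.log (Real.exp (ε / 4)) := by
            apply Real.log_le_log (by positivity) (by linarith)
        _ = ε / 4 := Real.log_exp _
    linarith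
  have hev := ((hmem M).and ((hmem (-M)).and ((hmem 0).and (hmem 1)))).and
    ((eventually_ge_atTop (1 - T)).and (eventually_ge_atTop (1:ℝ)))
  filter_upwards [hev] with t ht
  obtain ⟨⟨hsM, hsmM, hs0, hs1⟩, htT, ht1⟩ := ht
  rw [Real.dist_eq, sub_zero]
  rw [hc₁eq t (by linarith), hc₂eq t ht1]
  set x : E := ξ + e₁ t • (p - ξ) with hx
  set y : E := ξ + e₂ t • (q - ξ) with hy
  have hxΩ : x ∈ Ω := by
    have := hs0
    rwa [zero_smul, add_zero] at this
  have hyΩ : y ∈ Ω := by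
    have := hs1
    rwa [one_smul, add_sub_cancel] at this
  have hmain := aux_hilbertDist_le_of_deep Ω hΩb hxΩ hyΩ hM2 hsM hsmM
  calc |hilbertDist Ω x y| ≤ 2 * Real.log (1 + 1 / (M - 1)) := hmain
    _ < ε := hMbound
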